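/- Let G be a connected graph and let {V₁, V₂} be a connected 2-partition of G. Choose spanning trees T₁ of G[V₁] and T₂ of G[V₂] and any edge e of G joining V₁ to V₂; then T₁ ∪ T₂ ∪ {e} is a spanning tree of G, and deleting e from it recovers the partition {V₁, V₂}. Hence every connected 2-partition of a connected graph arises from some spanning tree by deleting one edge (i.e., the ReCom move can reach every connected 2-partition). -/

import Mathlib

open SimpleGraph

private lemma reach_of_closed {V : Type*} (A : SimpleGraph V) (S : Set V)
    (hcl : ∀ x y, A.Adj x y → x ∈ S → y ∈ S) :
    ∀ x y, A.Reachable x y → x ∈ S → y ∈ S := by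
  intro x y hr
  obtain ⟨p⟩ := hr
  induction p with
  | nil => exact id
  | cons h p ih => exact fun hx => ih (hcl _ _ h hx)

private lemma reach_in_part {V : Type*} (T : SimpleGraph V) (S : Set V)
    (hc : (T.induce S).Connected) {a b : V} (ha : a ∈ S) (hb : b ∈ S) :
    T.Reachable a b :=
  (hc ⟨a, ha⟩ ⟨b, hb⟩).map ⟨Subtype.val, fun h => h⟩

private lemma key_bridge {V : Type*} (T₁ T₂ : SimpleGraph V) (V₁ V₂ : Set V)
    (hdisj : Disjoint V₁ V₂)
    (hT₁in : ∀ a b, T₁.Adj a b → a ∈ V₁ ∧ b ∈ V₁)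
    (hT₂in : ∀ a b, T₂.Adj a b → a ∈ V₂ ∧ b ∈ V₂)
    (hT₁ac : (T₁.induce V₁).IsAcyclic)
    (u v : V) (hu : u ∈ V₁) (hv : v ∈ V₂)
    (a b : V) (hab : T₁.Adj a b) :
    ¬ ((T₁ ⊔ T₂ ⊔ SimpleGraph.fromEdgeSet {s(u, v)}).deleteEdges {s(a, b)}).Reachable a b := by
  obtain ⟨ha, hb⟩ := hT₁in a b hab
  have hd1 : ∀ {x}, x ∈ V₁ → x ∉ V₂ := fun hx => Set.disjoint_left.mp hdisj hx
  have proj : ∀ (x y : V)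
      (_ : ((T₁ ⊔ T₂ ⊔ SimpleGraph.fromEdgeSet {s(u, v)}).deleteEdges {s(a, b)}).Walk x y),
      (x ∈ V₁ → y ∈ V₁ → (T₁.deleteEdges {s(a, b)}).Reachable x y) ∧
      (x ∈ V₂ → y ∈ V₁ → (T₁.deleteEdges {s(a, b)}).Reachable u y) := by
    intro x y p
    induction p with
    | nil =>
      exact ⟨fun _ _ => Reachable.refl _, fun hx hy => absurd hx (hd1 hy)⟩
    | @cons x z y h p ih =>
      simp only [SimpleGraph.deleteEdges_adj, SimpleGraph.sup_adj, SimpleGraph.fromEdgeSet_adj,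
        Set.mem_singleton_iff] at h
      obtain ⟨(h1 | h2) | ⟨h3, -⟩, hne⟩ := h
      · refine ⟨fun hx hy => ?_, fun hx hy => ?_⟩
        · exact (SimpleGraph.deleteEdges_adj.mpr
            ⟨h1, by simpa using hne⟩).reachable.trans (ih.1 (hT₁in _ _ h1).2 hy)
        · exact absurd hx (hd1 (hT₁in _ _ h1).1)
      · refine ⟨fun hx hy => ?_, fun hx hy => ?_⟩
        · exact absurd (hT₂in _ _ h2).1 (hd1 hx)
        · exact ih.2 (hT₂in _ _ h2).2 hy
      · rcases Sym2.eq_iff.mp h3 with ⟨rfl, rfl⟩ | ⟨rfl, rfl⟩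
        · refine ⟨fun hx hy => ih.2 hv hy, fun hx hy => absurd hu (fun h' => hd1 h' hx)⟩
        · refine ⟨fun hx hy => absurd hv (fun h' => (hd1 hx) h'), fun hx hy => ih.1 hu hy⟩
  have transfer : ∀ (x y : V) (p : (T₁.deleteEdges {s(a, b)}).Walk x y)
      (hx : x ∈ V₁) (hy : y ∈ V₁),
      ((T₁.induce V₁).deleteEdges {s((⟨a, ha⟩ : V₁), (⟨b, hb⟩ : V₁))}).Reachable ⟨x, hx⟩ ⟨y, hy⟩ := by
    intro x y p
    induction p with
    | nil => intro hx hy; exact Reachable.refl _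
    | @cons x z y h p ih =>
      intro hx hy
      obtain ⟨h1, hne⟩ := SimpleGraph.deleteEdges_adj.mp h
      have hz : z ∈ V₁ := (hT₁in _ _ h1).2
      have adj' : ((T₁.induce V₁).deleteEdges
          {s((⟨a, ha⟩ : V₁), (⟨b, hb⟩ : V₁))}).Adj ⟨x, hx⟩ ⟨z, hz⟩ := by
        refine SimpleGraph.deleteEdges_adj.mpr ⟨h1, ?_⟩
        intro hmem
        exact hne (Set.mem_singleton_iff.mpr
          (by simpa using congrArg (Sym2.map Subtype.val) (Set.mem_singleton_iff.mp hmem)))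
      exact adj'.reachable.trans (ih hz hy)
  intro hr
  obtain ⟨p⟩ := hr
  obtain ⟨q⟩ := (proj a b p).1 ha hb
  have h3 := transfer a b q ha hb
  have hbr := SimpleGraph.isAcyclic_iff_forall_adj_isBridge.mp hT₁ac
    (show (T₁.induce V₁).Adj ⟨a, ha⟩ ⟨b, hb⟩ from hab)
  rw [SimpleGraph.isBridge_iff] at hbr
  exact hbr h3

/-- Given a connected 2-partition {V₁, V₂} of a connected graph G, spanning
trees T₁, T₂ of the induced subgraphs G[V₁], G[V₂] (realized as graphs on V
whose edges lie inside the parts), and an edge e = s(u,v) of G joining V₁ to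
V₂, the union T₁ ∪ T₂ ∪ {e} is a spanning tree of G, and deleting e from it
recovers the partition {V₁, V₂}.  Hence every connected 2-partition of G
arises from some spanning tree by deleting one edge. -/
theorem recom_reaches_every_connected_two_partition {V : Type*} [Fintype V]
    (G : SimpleGraph V) (hG : G.Connected)
    (V₁ V₂ : Set V) (h1 : V₁.Nonempty) (h2 : V₂.Nonempty)
    (hdisj : Disjoint V₁ V₂) (hunion : V₁ ∪ V₂ = Set.univ)
    (hc1 : (G.induce V₁).Connected) (hc2 : (G.induce V₂).Connected)
    (T₁ T₂ : SimpleGraph V)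
    (hT₁le : T₁ ≤ G) (hT₁in : ∀ a b, T₁.Adj a b → a ∈ V₁ ∧ b ∈ V₁)
    (hT₁tree : (T₁.induce V₁).IsTree)
    (hT₂le : T₂ ≤ G) (hT₂in : ∀ a b, T₂.Adj a b → a ∈ V₂ ∧ b ∈ V₂)
    (hT₂tree : (T₂.induce V₂).IsTree)
    (u v : V) (hu : u ∈ V₁) (hv : v ∈ V₂) (huv : G.Adj u v) :
    (T₁ ⊔ T₂ ⊔ SimpleGraph.fromEdgeSet {s(u, v)}).IsTree ∧
    (T₁ ⊔ T₂ ⊔ SimpleGraph.fromEdgeSet {s(u, v)}) ≤ G ∧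
    (∀ w : V,
      (((T₁ ⊔ T₂ ⊔ SimpleGraph.fromEdgeSet {s(u, v)}).deleteEdges
          {s(u, v)}).Reachable u w ↔ w ∈ V₁) ∧
      (((T₁ ⊔ T₂ ⊔ SimpleGraph.fromEdgeSet {s(u, v)}).deleteEdges
          {s(u, v)}).Reachable v w ↔ w ∈ V₂)) := by
  classical
  have hd1 : ∀ {x}, x ∈ V₁ → x ∉ V₂ := fun hx => Set.disjoint_left.mp hdisj hx
  have hne : u ≠ v := fun h => hd1 hu (h ▸ hv)
  have hmem : ∀ w : V, w ∈ V₁ ∨ w ∈ V₂ := by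
    intro w
    have : w ∈ V₁ ∪ V₂ := by rw [hunion]; trivial
    exact this
  have keyD : (T₁ ⊔ T₂ ⊔ SimpleGraph.fromEdgeSet {s(u, v)}).deleteEdges {s(u, v)} = T₁ ⊔ T₂ := by
    ext x y
    simp only [SimpleGraph.deleteEdges_adj, SimpleGraph.sup_adj, SimpleGraph.fromEdgeSet_adj,
      Set.mem_singleton_iff]
    constructor
    · rintro ⟨(h | h) | ⟨h, -⟩, hne'⟩
      · exact Or.inl h
      · exact Or.inr h
      · exact absurd h hne'
    · intro h
      refine ⟨Or.inl h, ?_⟩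
      intro heq
      rcases Sym2.eq_iff.mp heq with ⟨rfl, rfl⟩ | ⟨rfl, rfl⟩
      · rcases h with h | h
        · exact hd1 (hT₁in _ _ h).2 hv
        · exact hd1 hu (hT₂in _ _ h).1
      · rcases h with h | h
        · exact hd1 (hT₁in _ _ h).1 hv
        · exact hd1 hu (hT₂in _ _ h).2
  have closed1 : ∀ x y, (T₁ ⊔ T₂).Adj x y → x ∈ V₁ → y ∈ V₁ := by
    rintro x y (h | h) hx
    · exact (hT₁in _ _ h).2
    · exact absurd (hT₂in _ _ h).1 (hd1 hx)
  have closed2 : ∀ x y, (T₁ ⊔ T₂).Adj x y → x ∈ V₂ → y ∈ V₂ := by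
    rintro x y (h | h) hx
    · exact absurd hx (hd1 (hT₁in _ _ h).1)
    · exact (hT₂in _ _ h).2
  have mono1 := reach_of_closed _ _ closed1
  have mono2 := reach_of_closed _ _ closed2
  have reach1 : ∀ {x y}, x ∈ V₁ → y ∈ V₁ → T₁.Reachable x y :=
    fun hx hy => reach_in_part T₁ V₁ hT₁tree.isConnected hx hy
  have reach2 : ∀ {x y}, x ∈ V₂ → y ∈ V₂ → T₂.Reachable x y :=
    fun hx hy => reach_in_part T₂ V₂ hT₂tree.isConnected hx hy
  have hadjuv : (T₁ ⊔ T₂ ⊔ SimpleGraph.fromEdgeSet {s(u, v)}).Adj u v :=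
    Or.inr ⟨rfl, hne⟩
  have reachu : ∀ w, (T₁ ⊔ T₂ ⊔ SimpleGraph.fromEdgeSet {s(u, v)}).Reachable u w := by
    intro w
    rcases hmem w with hw | hw
    · exact (reach1 hu hw).mono (le_sup_left.trans le_sup_left)
    · exact hadjuv.reachable.trans ((reach2 hv hw).mono (le_sup_right.trans le_sup_left))
  have hconn : (T₁ ⊔ T₂ ⊔ SimpleGraph.fromEdgeSet {s(u, v)}).Connected := by
    rw [SimpleGraph.connected_iff]
    exact ⟨fun a b => (reachu a).symm.trans (reachu b), ⟨u⟩⟩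
  have hle : (T₁ ⊔ T₂ ⊔ SimpleGraph.fromEdgeSet {s(u, v)}) ≤ G := by
    refine sup_le (sup_le hT₁le hT₂le) ?_
    intro x y hxy
    obtain ⟨hmem', hne'⟩ := hxy
    rcases Sym2.eq_iff.mp (Set.mem_singleton_iff.mp hmem') with ⟨rfl, rfl⟩ | ⟨rfl, rfl⟩
    · exact huv
    · exact huv.symm
  have hac : (T₁ ⊔ T₂ ⊔ SimpleGraph.fromEdgeSet {s(u, v)}).IsAcyclic := by
    rw [SimpleGraph.isAcyclic_iff_forall_adj_isBridge]
    intro x y hxy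
    rw [SimpleGraph.isBridge_iff]
    rcases hxy with (h | h) | h
    · exact key_bridge T₁ T₂ V₁ V₂ hdisj hT₁in hT₂in hT₁tree.IsAcyclic u v hu hv x y h
    · have hk := key_bridge T₂ T₁ V₂ V₁ hdisj.symm hT₂in hT₁in hT₂tree.IsAcyclic v u hv hu x y h
      have hswap : T₂ ⊔ T₁ ⊔ SimpleGraph.fromEdgeSet {s(v, u)}
          = T₁ ⊔ T₂ ⊔ SimpleGraph.fromEdgeSet {s(u, v)} := by
        rw [sup_comm T₂ T₁, Sym2.eq_swap]
      rw [hswap] at hk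
      exact hk
    · obtain ⟨hmem', hne'⟩ := h
      have heq : s(x, y) = s(u, v) := Set.mem_singleton_iff.mp hmem'
      intro hr
      rw [heq] at hr
      have hr' : (T₁ ⊔ T₂).Reachable x y := by
        rw [← keyD]
        exact hr
      rcases Sym2.eq_iff.mp heq with ⟨rfl, rfl⟩ | ⟨rfl, rfl⟩
      · exact hd1 (mono1 _ _ hr' hu) hv
      · exact hd1 hu (mono2 _ _ hr' hv)
  refine ⟨⟨hconn, hac⟩, hle, ?_⟩
  intro w
  rw [keyD]
  constructor
  · constructor
    · exact fun hr => mono1 _ _ hr hu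
    · exact fun hw => (reach1 hu hw).mono le_sup_left
  · constructor
    · exact fun hr => mono2 _ _ hr hv
    · exact fun hw => (reach2 hv hw).mono le_sup_right
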